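/- arXiv:1803.08961 — 2 statements merged into one kernel-verified Lean document; each statement's English description precedes it below -/
import Mathlib

section
/- For every h in the Apéry set Ap(H, a_n), the monomial φ_a(h) does not belong to the initial ideal ini_<((x_n) + I(a)). -/
open MvPolynomial

/-- Sum of the exponents of a monomial (its total degree). -/
def degSum {m : ℕ} (u : Fin m →₀ ℕ) : ℕ := ∑ i, u i

/-- The reverse lexicographic order on monomials determined by a ranking permutation `σ`:
`σ i` is the rank of the variable `x i`; the variable of rank `0` is the greatest and the
variable of rank `m-1` is the smallest.  `u < v` iff `deg u < deg v`, or the degrees agree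
and at the differing position of largest rank (i.e. belonging to the smallest variable)
`u` has the larger exponent. -/
def RevLexLt {m : ℕ} (σ : Equiv.Perm (Fin m)) (u v : Fin m →₀ ℕ) : Prop :=
  degSum u < degSum v ∨
    (degSum u = degSum v ∧ ∃ i, v i < u i ∧ ∀ j, σ i < σ j → u j = v j)

/-- Extend a ranking permutation of `Fin m` to `Fin (m+1)` by letting the new
variable (of index `Fin.last m`, playing the role of `x₀`) have the largest rank,
i.e. be the smallest variable. -/
def extPerm {m : ℕ} (σ : Equiv.Perm (Fin m)) : Equiv.Perm (Fin (m + 1)) where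
  toFun := Fin.lastCases (Fin.last m) (fun i => (σ i).castSucc)
  invFun := Fin.lastCases (Fin.last m) (fun i => (σ.symm i).castSucc)
  left_inv := by
    intro x
    induction x using Fin.lastCases with
    | last => simp
    | cast i => simp
  right_inv := by
    intro x
    induction x using Fin.lastCases with
    | last => simp
    | cast i => simp

/-- `u` is the exponent vector of the leading monomial of `f` with respect to the
strict monomial order `lt`. -/
def IsLeadMon {K : Type} [Field K] {m : ℕ} (lt : (Fin m →₀ ℕ) → (Fin m →₀ ℕ) → Prop)
    (f : MvPolynomial (Fin m) K) (u : Fin m →₀ ℕ) : Prop :=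
  MvPolynomial.coeff u f ≠ 0 ∧ ∀ v, MvPolynomial.coeff v f ≠ 0 → v ≠ u → lt v u

/-- The initial ideal of `I` with respect to the monomial order `lt`: the ideal generated by
the leading monomials of the nonzero elements of `I`. -/
noncomputable def iniIdeal {K : Type} [Field K] {m : ℕ} (lt : (Fin m →₀ ℕ) → (Fin m →₀ ℕ) → Prop)
    (I : Ideal (MvPolynomial (Fin m) K)) : Ideal (MvPolynomial (Fin m) K) :=
  Ideal.span {p | ∃ f ∈ I, ∃ u, IsLeadMon lt f u ∧ p = MvPolynomial.monomial u (1 : K)}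

/-- `G` is a (finite) Gröbner basis of `I` w.r.t. `lt`. -/
def IsGB {K : Type} [Field K] {m : ℕ} (lt : (Fin m →₀ ℕ) → (Fin m →₀ ℕ) → Prop)
    (I : Ideal (MvPolynomial (Fin m) K)) (G : Set (MvPolynomial (Fin m) K)) : Prop :=
  G.Finite ∧ G ⊆ (I : Set (MvPolynomial (Fin m) K)) ∧ Ideal.span G = I ∧
    iniIdeal lt I =
      Ideal.span {p | ∃ g ∈ G, ∃ u, IsLeadMon lt g u ∧ p = MvPolynomial.monomial u (1 : K)}

/-- `G` is the reduced Gröbner basis of `I` w.r.t. `lt`: a Gröbner basis consisting of monic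
polynomials such that no monomial occurring in an element of `G` is divisible by the leading
monomial of another element of `G`. -/
def IsReducedGB {K : Type} [Field K] {m : ℕ} (lt : (Fin m →₀ ℕ) → (Fin m →₀ ℕ) → Prop)
    (I : Ideal (MvPolynomial (Fin m) K)) (G : Set (MvPolynomial (Fin m) K)) : Prop :=
  IsGB lt I G ∧
    (∀ g ∈ G, ∃ u, IsLeadMon lt g u ∧ MvPolynomial.coeff u g = 1) ∧
    (∀ g ∈ G, ∀ u, MvPolynomial.coeff u g ≠ 0 →
      ∀ g' ∈ G, g' ≠ g → ∀ v, IsLeadMon lt g' v → ¬ v ≤ u)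

/-- The homogenization `f^h` of a polynomial `f ∈ K[x_1,…,x_m]` with respect to a new
variable `x₀`, which is the variable of index `Fin.last m` in `K[x_1,…,x_m,x₀]`. -/
noncomputable def homogPoly {K : Type} [Field K] {m : ℕ} (f : MvPolynomial (Fin m) K) :
    MvPolynomial (Fin (m + 1)) K :=
  ∑ u ∈ f.support,
    MvPolynomial.monomial
      (Finsupp.mapDomain Fin.castSucc u +
        Finsupp.single (Fin.last m) (f.totalDegree - degSum u))
      (MvPolynomial.coeff u f)

/-- The homogenization of the ideal `I`, generated by the homogenizations of all its
elements. -/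
noncomputable def homogIdeal {K : Type} [Field K] {m : ℕ} (I : Ideal (MvPolynomial (Fin m) K)) :
    Ideal (MvPolynomial (Fin (m + 1)) K) :=
  Ideal.span (homogPoly '' (I : Set (MvPolynomial (Fin m) K)))

/-- The toric ideal `I(a)`: the kernel of the `K`-algebra map `K[x_1,…,x_m] → K[t]`,
`x_i ↦ t^{a_i}`. -/
noncomputable def toricIdeal (K : Type) [Field K] {m : ℕ} (a : Fin m → ℕ) :
    Ideal (MvPolynomial (Fin m) K) :=
  RingHom.ker (MvPolynomial.aeval (fun i => (Polynomial.X : Polynomial K) ^ a i)).toRingHom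

set_option synthInstance.maxHeartbeats 1000000 in
/-- A homogeneous ideal `I` of a polynomial ring `S` over a field is a Cohen-Macaulay ideal
(equivalently, `S/I` is a Cohen-Macaulay ring) iff there is a regular sequence on `S/I`,
consisting of elements of the irrelevant maximal ideal, whose length equals the Krull
dimension of `S/I`. -/
def IsCMIdeal {K : Type} [Field K] {m : ℕ} (I : Ideal (MvPolynomial (Fin m) K)) : Prop :=
  ∃ rs : List (MvPolynomial (Fin m) K),
    (∀ f ∈ rs, f ∈ Ideal.span (Set.range (MvPolynomial.X : Fin m → MvPolynomial (Fin m) K))) ∧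
    RingTheory.Sequence.IsRegular (MvPolynomial (Fin m) K ⧸ I)
      (rs.map (Ideal.Quotient.mk I)) ∧
    (rs.length : WithBot (WithTop ℕ)) = ringKrullDim (MvPolynomial (Fin m) K ⧸ I)

/-- `u` is (the exponent vector of) a minimal monomial generator of the monomial ideal `J`:
the monomial `x^u` lies in `J` but no proper divisor of it does. -/
def IsMinMonGen {K : Type} [Field K] {m : ℕ} (J : Ideal (MvPolynomial (Fin m) K))
    (u : Fin m →₀ ℕ) : Prop :=
  MvPolynomial.monomial u (1 : K) ∈ J ∧
    ∀ v, v ≤ u → v ≠ u → MvPolynomial.monomial v (1 : K) ∉ J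

/-- The dual sequence `a'` of `a`: `a'_i = a_n - a_i` for `i < n` and `a'_n = a_n`. -/
def dualSeq {m : ℕ} (a : Fin (m + 1) → ℕ) : Fin (m + 1) → ℕ :=
  fun i => if i = Fin.last m then a (Fin.last m) else a (Fin.last m) - a i

/-- The involution `σ(w₁,…,w_n) = (w₁,…,w_{n-1}, -(w₁+⋯+w_n))` of `ℤⁿ`. -/
def sigmaMap (m : ℕ) (w : Fin (m + 1) → ℤ) : Fin (m + 1) → ℤ :=
  fun i => if i = Fin.last m then -(∑ j, w j) else w i

/-- The lattice `L(a) = {w ∈ ℤⁿ : ⟨w, a⟩ = 0}` as a set. -/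
def latticeL {m : ℕ} (a : Fin m → ℕ) : Set (Fin m → ℤ) :=
  {w | ∑ i, w i * (a i : ℤ) = 0}

/-- The binomial `f_w = x^{w⁺} - x^{w⁻}` attached to an integer vector `w`. -/
noncomputable def binom (K : Type) [Field K] {m : ℕ} (w : Fin m → ℤ) :
    MvPolynomial (Fin m) K :=
  MvPolynomial.monomial (Finsupp.equivFunOnFinite.symm fun i => (w i).toNat) (1 : K) -
    MvPolynomial.monomial (Finsupp.equivFunOnFinite.symm fun i => (-w i).toNat) (1 : K)

/-- The numerical semigroup (additive submonoid of `ℕ`) generated by the `a_i`. -/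
def semiH {m : ℕ} (a : Fin m → ℕ) : AddSubmonoid ℕ := AddSubmonoid.closure (Set.range a)

/-- The Apéry set `Ap(H, c) = {x ∈ H : x - c ∉ H}`. -/
def apSet {m : ℕ} (a : Fin m → ℕ) (c : ℕ) : Set ℕ :=
  {x | x ∈ semiH a ∧ ¬ ∃ y ∈ semiH a, x = y + c}

/-- The `a`-degree of a monomial: `deg_a(x^u) = ∑ uᵢ aᵢ`. -/
def degA {m : ℕ} (a : Fin m → ℕ) (u : Fin m →₀ ℕ) : ℕ := ∑ i, u i * a i

/-- `u` is the smallest monomial (w.r.t. `lt`) whose `a`-degree equals `h`. -/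
def IsMinMonOfDeg {m : ℕ} (a : Fin m → ℕ) (lt : (Fin m →₀ ℕ) → (Fin m →₀ ℕ) → Prop)
    (h : ℕ) (u : Fin m →₀ ℕ) : Prop :=
  degA a u = h ∧ ∀ v, degA a v = h → v ≠ u → lt u v

/-- The minimal number of generators of an ideal. -/
noncomputable def muI {R : Type} [CommRing R] (I : Ideal R) : ℕ :=
  sInf {k | ∃ s : Finset R, s.card = k ∧ Ideal.span (s : Set R) = I}

/-- `lt` is a monomial order on the monomials of `K[x_1,…,x_m]`: a linear (strict) order
compatible with multiplication and having `1` as smallest monomial. -/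
structure IsMonOrder {m : ℕ} (lt : (Fin m →₀ ℕ) → (Fin m →₀ ℕ) → Prop) : Prop where
  irrefl : ∀ u, ¬ lt u u
  trans : ∀ u v w, lt u v → lt v w → lt u w
  total : ∀ u v, u ≠ v → lt u v ∨ lt v u
  add_right : ∀ u v w, lt u v → lt (u + w) (v + w)
  zero_lt : ∀ u, u ≠ 0 → lt 0 u

/-!
If `φ_a(h)` were an initial monomial of `J = (x_n) + I(a)`, some `g ∈ J` would have leading
monomial exactly `φ_a(h)`. Every other monomial of `g` is smaller, while every other monomial of
`a`-degree `h` is larger, so `φ_a(h)` is the only monomial of `g` of `a`-degree `h` and the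
coefficient of `t^h` in `g(t^{a_1}, …, t^{a_n})` is nonzero. But `I(a)` maps to `0` and
`x_n q` maps to `t^{a_n} q(t^{a_1}, …, t^{a_n})`, whose exponents lie in `a_n + H`;
hence `h - a_n ∈ H`, contradicting `h ∈ Ap(H, a_n)`.
-/

section LeadingMonomial

variable {K : Type} [Field K] {m : ℕ} {lt : (Fin m →₀ ℕ) → (Fin m →₀ ℕ) → Prop}

lemma exists_isLeadMon_le_of_monomial_mem_iniIdeal {I : Ideal (MvPolynomial (Fin m) K)}
    {u : Fin m →₀ ℕ} (hu : monomial u (1 : K) ∈ iniIdeal lt I) :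
    ∃ f ∈ I, ∃ w, IsLeadMon lt f w ∧ w ≤ u := by
  have hgen : {p | ∃ f ∈ I, ∃ w, IsLeadMon lt f w ∧ p = monomial w (1 : K)} =
      (fun w => monomial w (1 : K)) '' {w | ∃ f ∈ I, IsLeadMon lt f w} := by
    ext p
    constructor
    · rintro ⟨f, hf, w, hw, rfl⟩
      exact ⟨w, ⟨f, hf, hw⟩, rfl⟩
    · rintro ⟨w, ⟨f, hf, hw⟩, rfl⟩
      exact ⟨f, hf, w, hw, rfl⟩
  rw [iniIdeal, hgen, mem_ideal_span_monomial_image] at hu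
  obtain ⟨w, ⟨f, hf, hw⟩, hwu⟩ := hu u (by simp)
  exact ⟨f, hf, w, hw, hwu⟩

lemma IsLeadMon.mul_monomial (hadd : ∀ u v w, lt u v → lt (u + w) (v + w))
    {f : MvPolynomial (Fin m) K} {w : Fin m →₀ ℕ} (hf : IsLeadMon lt f w) (d : Fin m →₀ ℕ) :
    IsLeadMon lt (f * monomial d 1) (w + d) := by
  refine ⟨by simpa [coeff_mul_monomial] using hf.1, fun v hv hvw => ?_⟩
  rw [coeff_mul_monomial'] at hv
  split_ifs at hv with hdv
  · obtain ⟨c, rfl⟩ := le_iff_exists_add.mp hdv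
    rw [add_tsub_cancel_left, mul_one] at hv
    have hcw : c ≠ w := by rintro rfl; exact hvw (add_comm _ _)
    simpa only [add_comm d] using hadd c w d (hf.2 c hv hcw)
  · exact absurd rfl hv

lemma exists_isLeadMon_of_monomial_mem_iniIdeal (hadd : ∀ u v w, lt u v → lt (u + w) (v + w))
    {I : Ideal (MvPolynomial (Fin m) K)} {u : Fin m →₀ ℕ}
    (hu : monomial u (1 : K) ∈ iniIdeal lt I) : ∃ g ∈ I, IsLeadMon lt g u := by
  obtain ⟨f, hf, w, hw, hwu⟩ := exists_isLeadMon_le_of_monomial_mem_iniIdeal hu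
  refine ⟨f * monomial (u - w) 1, I.mul_mem_right _ hf, ?_⟩
  simpa only [add_tsub_cancel_of_le hwu] using hw.mul_monomial hadd (u - w)

end LeadingMonomial

section Toric

variable {K : Type} [Field K] {m : ℕ} (a : Fin m → ℕ)

lemma coeff_aeval_X_pow (p : MvPolynomial (Fin m) K) (k : ℕ) :
    (aeval (fun i => (Polynomial.X : Polynomial K) ^ a i) p).coeff k =
      ∑ v ∈ p.support with degA a v = k, coeff v p := by
  rw [aeval_def, eval₂_eq, Polynomial.finsetSum_coeff, Finset.sum_filter]
  refine Finset.sum_congr rfl fun d _ => ?_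
  have hX : ∏ i ∈ d.support, ((Polynomial.X : Polynomial K) ^ a i) ^ d i =
      Polynomial.X ^ degA a d := by
    rw [Finset.prod_subset d.support.subset_univ
      (fun i _ hi => by simp [Finsupp.notMem_support_iff.mp hi]),
      degA, ← Finset.prod_pow_eq_pow_sum]
    exact Finset.prod_congr rfl fun i _ => by rw [← pow_mul, mul_comm]
  rw [hX, Polynomial.algebraMap_eq, Polynomial.coeff_C_mul, Polynomial.coeff_X_pow]
  by_cases hdk : degA a d = k
  · simp [hdk]
  · simp [hdk, Ne.symm hdk]

lemma degA_mem_semiH (v : Fin m →₀ ℕ) : degA a v ∈ semiH a :=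
  AddSubmonoid.sum_mem _ fun i _ =>
    smul_eq_mul (v i) (a i) ▸
      nsmul_mem (AddSubmonoid.subset_closure (Set.mem_range_self i)) (v i)

lemma mem_semiH_of_coeff_aeval_ne_zero {p : MvPolynomial (Fin m) K} {k : ℕ}
    (hk : (aeval (fun i => (Polynomial.X : Polynomial K) ^ a i) p).coeff k ≠ 0) :
    k ∈ semiH a := by
  rw [coeff_aeval_X_pow] at hk
  obtain ⟨v, hv, -⟩ := Finset.exists_ne_zero_of_sum_ne_zero hk
  exact (Finset.mem_filter.mp hv).2 ▸ degA_mem_semiH a v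

lemma exists_mem_semiH_add_of_coeff_aeval_ne_zero {i : Fin m} {p : MvPolynomial (Fin m) K}
    (hp : p ∈ Ideal.span {X i} ⊔ toricIdeal K a) {k : ℕ}
    (hk : (aeval (fun i => (Polynomial.X : Polynomial K) ^ a i) p).coeff k ≠ 0) :
    ∃ y ∈ semiH a, k = y + a i := by
  obtain ⟨s, hs, r, hr, rfl⟩ := Submodule.mem_sup.mp hp
  obtain ⟨q, rfl⟩ := Ideal.mem_span_singleton'.mp hs
  replace hr : aeval (fun i => (Polynomial.X : Polynomial K) ^ a i) r = 0 := hr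
  rw [map_add, hr, add_zero, map_mul, aeval_X, Polynomial.coeff_mul_X_pow'] at hk
  split_ifs at hk with hle
  · exact ⟨k - a i, mem_semiH_of_coeff_aeval_ne_zero a hk, by omega⟩
  · exact absurd rfl hk

lemma IsLeadMon.coeff_aeval_ne_zero {lt : (Fin m →₀ ℕ) → (Fin m →₀ ℕ) → Prop}
    (hasymm : ∀ u v, lt u v → ¬ lt v u) {g : MvPolynomial (Fin m) K} {u : Fin m →₀ ℕ}
    (hg : IsLeadMon lt g u) {h : ℕ} (hu : IsMinMonOfDeg a lt h u) :
    (aeval (fun i => (Polynomial.X : Polynomial K) ^ a i) g).coeff h ≠ 0 := by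
  have hsingle : {v ∈ g.support | degA a v = h} = {u} := by
    ext v
    simp only [Finset.mem_filter, mem_support_iff, Finset.mem_singleton]
    constructor
    · rintro ⟨hv, hvh⟩
      by_contra hvu
      exact hasymm _ _ (hg.2 v hv hvu) (hu.2 v hvh hvu)
    · rintro rfl
      exact ⟨hg.1, hu.1⟩
  rw [coeff_aeval_X_pow, hsingle, Finset.sum_singleton]
  exact hg.1

theorem monomial_notMem_iniIdeal_span_X_sup_toricIdeal
    {lt : (Fin m →₀ ℕ) → (Fin m →₀ ℕ) → Prop} (hasymm : ∀ u v, lt u v → ¬ lt v u)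
    (hadd : ∀ u v w, lt u v → lt (u + w) (v + w)) {i : Fin m} {h : ℕ}
    (hh : h ∈ apSet a (a i)) {u : Fin m →₀ ℕ} (hu : IsMinMonOfDeg a lt h u) :
    monomial u (1 : K) ∉ iniIdeal lt (Ideal.span {X i} ⊔ toricIdeal K a) := by
  intro hmem
  obtain ⟨g, hg, hlead⟩ := exists_isLeadMon_of_monomial_mem_iniIdeal hadd hmem
  exact hh.2 <|
    exists_mem_semiH_add_of_coeff_aeval_ne_zero a hg (hlead.coeff_aeval_ne_zero a hasymm hu)

end Toric

section RevLex

variable {m : ℕ} (σ : Equiv.Perm (Fin m))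

lemma RevLexLt.asymm {u v : Fin m →₀ ℕ} (huv : RevLexLt σ u v) : ¬ RevLexLt σ v u := by
  rintro (hvu | ⟨hdvu, j, hj, hjeq⟩) <;> rcases huv with huv | ⟨hduv, i, hi, hieq⟩
  any_goals omega
  rcases lt_trichotomy (σ i) (σ j) with hij | hij | hij
  · have := hieq j hij; omega
  · obtain rfl := σ.injective hij; omega
  · have := hjeq i hij; omega

lemma degSum_add (u v : Fin m →₀ ℕ) : degSum (u + v) = degSum u + degSum v := by
  simp [degSum, Finset.sum_add_distrib]

lemma RevLexLt.add_right {u v : Fin m →₀ ℕ} (huv : RevLexLt σ u v) (w : Fin m →₀ ℕ) :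
    RevLexLt σ (u + w) (v + w) := by
  rw [RevLexLt, degSum_add, degSum_add]
  rcases huv with hd | ⟨hd, i, hi, hieq⟩
  · exact Or.inl (by omega)
  · refine Or.inr ⟨by rw [hd], i, by simpa using hi, fun j hj => ?_⟩
    simp [hieq j hj]

end RevLex

theorem stmt10_general {K : Type} [Field K] {n : ℕ}
    (a : Fin (n + 1) → ℕ)
    (σ : Equiv.Perm (Fin (n + 1))) :
    ∀ h ∈ apSet a (a (Fin.last n)), ∀ u : Fin (n + 1) →₀ ℕ,
      IsMinMonOfDeg a (RevLexLt σ) h u →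
      MvPolynomial.monomial u (1 : K) ∉
        iniIdeal (RevLexLt σ)
          (Ideal.span {(MvPolynomial.X (Fin.last n) : MvPolynomial (Fin (n + 1)) K)} ⊔
            toricIdeal K a) :=
  fun _ hh _ hu => monomial_notMem_iniIdeal_span_X_sup_toricIdeal a
    (fun _ _ => RevLexLt.asymm σ) (fun _ _ w huv => huv.add_right σ w) hh hu

/-- For every `h` in the Apéry set `Ap(H, a_n)`, the smallest monomial `φ_a(h)` of `a`-degree
`h` does not belong to `ini_<((x_n) + I(a))`. -/
theorem stmt10 {K : Type} [Field K] {n : ℕ}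
    (a : Fin (n + 1) → ℕ) (ha_inj : Function.Injective a) (ha_pos : ∀ i, 0 < a i)
    (ha_gcd : Finset.univ.gcd a = 1)
    (ha_lt : ∀ i, i ≠ Fin.last n → a i < a (Fin.last n))
    (σ : Equiv.Perm (Fin (n + 1))) (hσ : σ (Fin.last n) = Fin.last n) :
    ∀ h ∈ apSet a (a (Fin.last n)), ∀ u : Fin (n + 1) →₀ ℕ,
      IsMinMonOfDeg a (RevLexLt σ) h u →
      MvPolynomial.monomial u (1 : K) ∉
        iniIdeal (RevLexLt σ)
          (Ideal.span {(MvPolynomial.X (Fin.last n) : MvPolynomial (Fin (n + 1)) K)} ⊔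
            toricIdeal K a) :=
  stmt10_general a σ
end

section
/- Let n ≥ 2, S = K[x_1,…,x_n], m = (x_1,…,x_n), and let I ⊂ S be a graded ideal with m^k ⊆ I. Let < be any monomial order on S. Then μ(I) ≤ μ(ini_<(I)) ≤ μ(m^k) = C(n+k−1, n−1), and moreover μ(I) = C(n+k−1, n−1) if and only if I = m^k. -/
open MvPolynomial

/-!
Choosing, for each minimal monomial generator of `in(I)`, an element of `I` with that leading
monomial gives generators of `I` by the division algorithm, so `μ(I) ≤ μ(in(I))`.
For a monomial ideal `J`, `μ(J)` is the number of minimal monomial generators: for `f ∈ J` and a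
minimal generator `v` one has `coeff v (c * f) = c(0) · coeff v f`, so the coefficients at the
minimal generators map any generating set of `J` onto a spanning set of `K^{gens}`.
If `m^k ⊆ J`, the minimal generators have degree `≤ k`, and raising the exponent of `x_i` until
the degree is `k` embeds them into the monomials of degree `k`; a minimal generator of degree
`< k` makes this embedding miss a monomial. So `μ(in(I)) ≤ C(n+k-1, n-1)`, with equality only
for `in(I) = m^k`, and then `I = m^k` by the division algorithm again.
-/
section MonomialOrder

variable {n : ℕ} {lt : (Fin n →₀ ℕ) → (Fin n →₀ ℕ) → Prop}

theorem IsMonOrder.isStrictOrder (hlt : IsMonOrder lt) : IsStrictOrder _ lt :=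
  { irrefl := hlt.irrefl, trans := hlt.trans }

theorem IsMonOrder.lt_of_le_of_ne (hlt : IsMonOrder lt) {u v : Fin n →₀ ℕ} (h : u ≤ v)
    (hne : u ≠ v) : lt u v := by
  obtain ⟨w, rfl⟩ := exists_add_of_le h
  have hw : w ≠ 0 := by rintro rfl; simp at hne
  simpa [add_comm] using hlt.add_right 0 w u (hlt.zero_lt w hw)

theorem IsMonOrder.not_lt_of_le (hlt : IsMonOrder lt) {u v : Fin n →₀ ℕ} (h : u ≤ v) :
    ¬ lt v u := by
  rcases eq_or_ne u v with rfl | hne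
  · exact hlt.irrefl u
  · exact fun hvu => hlt.irrefl u (hlt.trans _ _ _ (hlt.lt_of_le_of_ne h hne) hvu)

theorem IsMonOrder.wellFounded (hlt : IsMonOrder lt) : WellFounded lt := by
  have := hlt.isStrictOrder
  refine RelEmbedding.wellFounded_iff_isEmpty.mpr ⟨fun e => ?_⟩
  obtain ⟨i, j, hij, hle⟩ := wellQuasiOrdered_le (fun m => e m)
  exact hlt.not_lt_of_le hle (e.map_rel_iff.mpr hij)

theorem IsMonOrder.exists_max (hlt : IsMonOrder lt) {s : Set (Fin n →₀ ℕ)} (hs : s.Finite)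
    (hne : s.Nonempty) : ∃ u ∈ s, ∀ v ∈ s, v ≠ u → lt v u := by
  have := hlt.isStrictOrder
  obtain ⟨u, -, hmax⟩ :=
    (hs.wellFoundedOn (r := Function.swap lt)).has_min Set.univ ⟨⟨_, hne.some_mem⟩, trivial⟩
  exact ⟨u, u.2, fun v hv hvu => (hlt.total v u hvu).resolve_right (hmax ⟨v, hv⟩ trivial)⟩

end MonomialOrder

section LeadingMonomial

variable {K : Type} [Field K] {n : ℕ} {lt : (Fin n →₀ ℕ) → (Fin n →₀ ℕ) → Prop}
  {f g : MvPolynomial (Fin n) K} {u : Fin n →₀ ℕ}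

theorem exists_isLeadMon (hlt : IsMonOrder lt) (hf : f ≠ 0) : ∃ u, IsLeadMon lt f u := by
  obtain ⟨u, hu, hmax⟩ := hlt.exists_max f.support.finite_toSet (support_nonempty.mpr hf)
  exact ⟨u, mem_support_iff.mp hu, fun v hv hvu => hmax v (mem_support_iff.mpr hv) hvu⟩

theorem isLeadMon_monomial {c : K} (hc : c ≠ 0) (u : Fin n →₀ ℕ) :
    IsLeadMon lt (monomial u c) u := by
  classical
  refine ⟨by simpa [coeff_monomial] using hc, fun v hv hvu => ?_⟩
  simp [coeff_monomial, Ne.symm hvu] at hv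

theorem IsLeadMon.monomial_mul (hlt : IsMonOrder lt) (hf : IsLeadMon lt f u) {c : K}
    (hc : c ≠ 0) (w : Fin n →₀ ℕ) : IsLeadMon lt (monomial w c * f) (w + u) := by
  refine ⟨by simpa [coeff_monomial_mul] using mul_ne_zero hc hf.1, fun v hv hvu => ?_⟩
  rw [coeff_monomial_mul'] at hv
  split_ifs at hv with hwv
  · obtain ⟨v, rfl⟩ := exists_add_of_le hwv
    rw [add_tsub_cancel_left] at hv
    have hvu' : v ≠ u := by rintro rfl; exact hvu rfl
    simpa [add_comm w] using hlt.add_right _ _ w (hf.2 v (right_ne_zero_of_mul hv) hvu')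
  · exact absurd rfl hv

theorem IsLeadMon.lt_of_coeff_sub_ne_zero (hf : IsLeadMon lt f u) (hg : IsLeadMon lt g u)
    (hfg : coeff u f = coeff u g) {w : Fin n →₀ ℕ} (hw : coeff w (f - g) ≠ 0) : lt w u := by
  have hwu : w ≠ u := by rintro rfl; simp [hfg] at hw
  by_cases hfw : coeff w f = 0
  · exact hg.2 w (by simpa [hfw] using hw) hwu
  · exact hf.2 w hfw hwu

end LeadingMonomial

section MinimalNumberOfGenerators

variable {R : Type} [CommRing R] {I : Ideal R}

theorem muI_le_card (s : Finset R) (hs : Ideal.span (s : Set R) = I) : muI I ≤ s.card :=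
  Nat.sInf_le ⟨s, rfl, hs⟩

theorem muI_le_ncard {S : Set R} (hS : S.Finite) (hs : Ideal.span S = I) : muI I ≤ S.ncard := by
  rw [Set.ncard_eq_toFinset_card S hS]
  exact muI_le_card _ (by rwa [Set.Finite.coe_toFinset])

theorem exists_card_eq_muI (hI : I.FG) :
    ∃ s : Finset R, s.card = muI I ∧ Ideal.span (s : Set R) = I := by
  obtain ⟨s, hs⟩ := hI
  have : muI I ∈ {k | ∃ s : Finset R, s.card = k ∧ Ideal.span (s : Set R) = I} :=
    Nat.sInf_mem ⟨s.card, s, rfl, hs⟩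
  exact this

end MinimalNumberOfGenerators


noncomputable def monomialIdeal (K : Type) [Field K] {n : ℕ} (U : Set (Fin n →₀ ℕ)) :
    Ideal (MvPolynomial (Fin n) K) :=
  Ideal.span ((fun u => monomial u (1 : K)) '' U)

section MonomialIdeal

variable {K : Type} [Field K] {n : ℕ} {U : Set (Fin n →₀ ℕ)}
  {J : Ideal (MvPolynomial (Fin n) K)} {u v : Fin n →₀ ℕ}

theorem mem_monomialIdeal {f : MvPolynomial (Fin n) K} :
    f ∈ monomialIdeal K U ↔ ∀ w ∈ f.support, ∃ t ∈ U, t ≤ w :=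
  mem_ideal_span_monomial_image

theorem monomial_mem_monomialIdeal :
    monomial u (1 : K) ∈ monomialIdeal K U ↔ ∃ t ∈ U, t ≤ u := by
  classical
  simp [mem_monomialIdeal, support_monomial]

theorem IsMinMonGen.eq_of_le (hv : IsMinMonGen J v) (hu : monomial u (1 : K) ∈ J)
    (huv : u ≤ v) : u = v :=
  by_contra fun hne => hv.2 u huv hne hu

theorem exists_isMinMonGen_le (hu : monomial u (1 : K) ∈ J) : ∃ v ≤ u, IsMinMonGen J v := by
  obtain ⟨v, ⟨hvu, hvJ⟩, hmin⟩ :=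
    wellFounded_lt.has_min {v | v ≤ u ∧ monomial v (1 : K) ∈ J} ⟨u, le_rfl, hu⟩
  exact ⟨v, hvu, hvJ, fun w hwv hne hwJ =>
    hmin w ⟨hwv.trans hvu, hwJ⟩ (lt_of_le_of_ne hwv hne)⟩

theorem setOf_isMinMonGen_finite (J : Ideal (MvPolynomial (Fin n) K)) :
    {v | IsMinMonGen J v}.Finite :=
  WellQuasiOrderedLE.finite_of_isAntichain fun _ hu _ hv hne huv => hne (hv.eq_of_le hu.1 huv)

theorem monomialIdeal_setOf_isMinMonGen (U : Set (Fin n →₀ ℕ)) :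
    monomialIdeal K {v | IsMinMonGen (monomialIdeal K U) v} = monomialIdeal K U := by
  refine le_antisymm (Ideal.span_le.mpr ?_) (Ideal.span_le.mpr ?_)
  · rintro _ ⟨v, hv, rfl⟩
    exact hv.1
  · rintro _ ⟨t, ht, rfl⟩
    obtain ⟨v, hvt, hv⟩ :=
      exists_isMinMonGen_le (K := K) (monomial_mem_monomialIdeal.mpr ⟨t, ht, le_rfl⟩)
    exact monomial_mem_monomialIdeal.mpr ⟨v, hv, hvt⟩

theorem coeff_eq_zero_of_lt_isMinMonGen {f : MvPolynomial (Fin n) K} (hf : f ∈ monomialIdeal K U)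
    (hv : IsMinMonGen (monomialIdeal K U) v) (huv : u < v) : coeff u f = 0 := by
  by_contra hu
  obtain ⟨t, ht, htu⟩ := mem_monomialIdeal.mp hf u (mem_support_iff.mpr hu)
  exact huv.ne (hv.eq_of_le (monomial_mem_monomialIdeal.mpr ⟨t, ht, htu⟩) huv.le)

theorem coeff_mul_of_isMinMonGen {f : MvPolynomial (Fin n) K} (hf : f ∈ monomialIdeal K U)
    (hv : IsMinMonGen (monomialIdeal K U) v) (c : MvPolynomial (Fin n) K) :
    coeff v (c * f) = coeff 0 c * coeff v f := by
  classical
  rw [coeff_mul, Finset.sum_eq_single (0, v)]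
  · rintro ⟨a, b⟩ hab hne
    rw [Finset.HasAntidiagonal.mem_antidiagonal] at hab
    have hbv : b < v := lt_of_le_of_ne (hab ▸ le_add_self) fun hbv => hne (by
      subst hbv; simpa using hab)
    rw [coeff_eq_zero_of_lt_isMinMonGen hf hv hbv, mul_zero]
  · simp

theorem ncard_isMinMonGen_le_card {s : Finset (MvPolynomial (Fin n) K)}
    (hs : Ideal.span (s : Set (MvPolynomial (Fin n) K)) = monomialIdeal K U) :
    {v | IsMinMonGen (monomialIdeal K U) v}.ncard ≤ s.card := by
  classical
  set F := (setOf_isMinMonGen_finite (monomialIdeal K U)).toFinset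
  have hF : ∀ v : F, IsMinMonGen (monomialIdeal K U) v := fun v =>
    (Set.Finite.mem_toFinset (setOf_isMinMonGen_finite _)).mp v.2
  let θ : MvPolynomial (Fin n) K →ₗ[K] (F → K) := LinearMap.pi fun v => lcoeff K v
  have hθ : ∀ f ∈ monomialIdeal K U, θ f ∈ Submodule.span K (θ '' s) := by
    intro f hf
    obtain ⟨c, -, rfl⟩ := Submodule.mem_span_finset.mp (hs ▸ hf)
    rw [map_sum]
    refine Submodule.sum_mem _ fun a ha => ?_
    have : θ (c a • a) = coeff 0 (c a) • θ a := by
      ext v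
      exact coeff_mul_of_isMinMonGen (hs ▸ Ideal.subset_span ha) (hF v) _
    rw [this]
    exact Submodule.smul_mem _ _ (Submodule.subset_span ⟨a, ha, rfl⟩)
  have hspan : Submodule.span K (θ '' s) = ⊤ := by
    rw [eq_top_iff, ← (Pi.basisFun K F).span_eq, Submodule.span_le]
    rintro - ⟨v, rfl⟩
    have : Pi.basisFun K F v = θ (monomial v 1) := by
      ext w
      by_cases hwv : w = v
      · subst hwv; simp [θ]
      · simp [θ, coeff_monomial, Pi.single_eq_of_ne hwv, Subtype.coe_ne_coe.mpr (Ne.symm hwv)]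
    rw [this]
    exact hθ _ (hF v).1
  calc {v | IsMinMonGen (monomialIdeal K U) v}.ncard = Module.finrank K (F → K) := by
        simp [F, Set.ncard_eq_toFinset_card _ (setOf_isMinMonGen_finite _)]
    _ ≤ (s.image θ).card := by
        have := finrank_span_finset_le_card (R := K) (s.image θ)
        rwa [Set.finrank, Finset.coe_image, hspan, finrank_top] at this
    _ ≤ s.card := Finset.card_image_le

theorem muI_monomialIdeal (U : Set (Fin n →₀ ℕ)) :
    muI (monomialIdeal K U) = {v | IsMinMonGen (monomialIdeal K U) v}.ncard := by
  set G := {v | IsMinMonGen (monomialIdeal K U) v}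
  have hfin : ((fun u => monomial u (1 : K)) '' G).Finite := (setOf_isMinMonGen_finite _).image _
  have hspan : Ideal.span ((fun u => monomial u (1 : K)) '' G) = monomialIdeal K U :=
    monomialIdeal_setOf_isMinMonGen U
  refine le_antisymm ?_ ?_
  · calc muI (monomialIdeal K U) ≤ ((fun u => monomial u (1 : K)) '' G).ncard :=
          muI_le_ncard hfin hspan
      _ = G.ncard := Set.ncard_image_of_injective _ (monomial_left_injective one_ne_zero)
  · obtain ⟨s, hs, hspan'⟩ :=
      exists_card_eq_muI (I := monomialIdeal K U) ⟨hfin.toFinset, by rwa [hfin.coe_toFinset]⟩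
    exact hs ▸ ncard_isMinMonGen_le_card hspan'

end MonomialIdeal

section PowerOfMaximalIdeal

variable {K : Type} [Field K] {n k : ℕ}

theorem Finsupp.degree_lt_degree {σ : Type*} {u v : σ →₀ ℕ} (h : u < v) :
    u.degree < v.degree := by
  obtain ⟨w, rfl⟩ := exists_add_of_le h.le
  have hw : w ≠ 0 := by rintro rfl; simp at h
  rw [map_add]
  have := (Finsupp.degree_eq_zero_iff w).not.mpr hw
  omega

theorem ncard_setOf_degree_eq (n k : ℕ) :
    {u : Fin n →₀ ℕ | u.degree = k}.ncard = (n + k - 1).choose k := by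
  classical
  let e : {u : Fin n →₀ ℕ | u.degree = k} ≃ Sym (Fin n) k :=
    (Equiv.subtypeEquivRight fun _ => Iff.rfl).trans (Sym.equivNatSum (Fin n) k).symm
  rw [← Nat.card_coe_set_eq, Nat.card_congr e, Sym.natCard_sym_eq_choose,
    Nat.card_eq_fintype_card, Fintype.card_fin]

theorem pow_idealOfVars_eq_monomialIdeal (k : ℕ) :
    idealOfVars (Fin n) K ^ k = monomialIdeal K {u | u.degree = k} :=
  pow_idealOfVars_eq_span k

theorem isMinMonGen_pow_idealOfVars_iff {v : Fin n →₀ ℕ} :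
    IsMinMonGen (idealOfVars (Fin n) K ^ k) v ↔ v.degree = k := by
  simp only [IsMinMonGen, monomial_mem_pow_idealOfVars_iff _ _ one_ne_zero]
  constructor
  · rintro ⟨hk, hmin⟩
    obtain ⟨w, hwv, hw⟩ := Finsupp.exists_le_degree_eq v k hk
    by_contra hne
    exact hmin w hwv (by rintro rfl; exact hne hw) hw.ge
  · rintro rfl
    exact ⟨le_rfl, fun w hwv hne => (Finsupp.degree_lt_degree (lt_of_le_of_ne hwv hne)).not_ge⟩

theorem muI_pow_idealOfVars (k : ℕ) :
    muI (idealOfVars (Fin n) K ^ k) = (n + k - 1).choose k := by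
  rw [← ncard_setOf_degree_eq, pow_idealOfVars_eq_monomialIdeal, muI_monomialIdeal,
    ← pow_idealOfVars_eq_monomialIdeal]
  simp_rw [isMinMonGen_pow_idealOfVars_iff]

end PowerOfMaximalIdeal

noncomputable def padDegree {n : ℕ} (i : Fin n) (k : ℕ) (v : Fin n →₀ ℕ) :
    Fin n →₀ ℕ :=
  v + Finsupp.single i (k - v.degree)

section IdealContainingPower

variable {K : Type} [Field K] {n k : ℕ} {J : Ideal (MvPolynomial (Fin n) K)}
  {U : Set (Fin n →₀ ℕ)} {v : Fin n →₀ ℕ}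

theorem degree_padDegree (i : Fin n) (hv : v.degree ≤ k) : (padDegree i k v).degree = k := by
  simp only [padDegree, map_add, Finsupp.degree_single]
  omega

theorem padDegree_apply_of_ne {i j : Fin n} (hij : i ≠ j) : padDegree i k v j = v j := by
  simp only [padDegree, Finsupp.add_apply, Finsupp.single_eq_of_ne' hij, add_zero]

theorem degree_le_of_isMinMonGen (hJ : idealOfVars (Fin n) K ^ k ≤ J) (hv : IsMinMonGen J v) :
    v.degree ≤ k := by
  by_contra! hk
  obtain ⟨w, hwv, hw⟩ := Finsupp.exists_le_degree_eq v k hk.le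
  have hwJ : monomial w (1 : K) ∈ J :=
    hJ ((monomial_mem_pow_idealOfVars_iff _ _ one_ne_zero).mpr hw.ge)
  exact absurd (hv.eq_of_le hwJ hwv) (by rintro rfl; omega)

theorem injOn_padDegree (i : Fin n) :
    Set.InjOn (padDegree i k) {v | IsMinMonGen J v} := by
  suffices key : ∀ u v, IsMinMonGen J u → IsMinMonGen J v →
      padDegree i k u = padDegree i k v → u.degree ≤ v.degree → u = v by
    intro u hu v hv huv
    rcases le_total u.degree v.degree with h | h
    exacts [key u v hu hv huv h, (key v u hv hu huv.symm h).symm]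
  intro u v hu hv huv hdeg
  refine hv.eq_of_le hu.1 fun j => ?_
  have := congrArg (· j) huv
  simp only [padDegree, Finsupp.add_apply, Finsupp.single_apply] at this
  split_ifs at this <;> omega

theorem ncard_isMinMonGen_le (i : Fin n) (hJ : idealOfVars (Fin n) K ^ k ≤ J) :
    {v | IsMinMonGen J v}.ncard ≤ {u : Fin n →₀ ℕ | u.degree = k}.ncard := by
  rw [← (injOn_padDegree i).ncard_image]
  refine Set.ncard_le_ncard ?_ (Finsupp.finite_of_degree_eq k)
  rintro _ ⟨v, hv, rfl⟩
  exact degree_padDegree i (degree_le_of_isMinMonGen hJ hv)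

/-- Among the minimal generators of degree `< k` pick `u` with the largest exponent of `x j`;
then `padDegree j k u` is not of the form `padDegree i k v`. -/
theorem ncard_isMinMonGen_lt {i j : Fin n} (hij : i ≠ j) (hJ : idealOfVars (Fin n) K ^ k ≤ J)
    (h : ∃ v, IsMinMonGen J v ∧ v.degree < k) :
    {v | IsMinMonGen J v}.ncard < {u : Fin n →₀ ℕ | u.degree = k}.ncard := by
  obtain ⟨u, ⟨hu, huk⟩, hmax⟩ := Set.exists_max_image {v | IsMinMonGen J v ∧ v.degree < k}
    (· j) ((setOf_isMinMonGen_finite J).subset fun _ hv => hv.1) h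
  have hmiss : ∀ v, IsMinMonGen J v → padDegree i k v ≠ padDegree j k u := by
    intro v hv hvu
    rcases (degree_le_of_isMinMonGen hJ hv).eq_or_lt with hvk | hvk
    · have hv_eq : padDegree i k v = v := by simp [padDegree, hvk]
      have := hv.eq_of_le hu.1 (hv_eq ▸ hvu ▸ le_self_add)
      subst this
      omega
    · have := congrArg (· j) hvu
      rw [padDegree_apply_of_ne hij] at this
      simp only [padDegree, Finsupp.add_apply, Finsupp.single_eq_same] at this
      have := hmax v ⟨hv, hvk⟩
      omega
  rw [← (injOn_padDegree i).ncard_image]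
  refine Set.ncard_lt_ncard ?_ (Finsupp.finite_of_degree_eq k)
  refine (Set.ssubset_iff_of_subset ?_).mpr ⟨padDegree j k u, degree_padDegree j huk.le, ?_⟩
  · rintro _ ⟨v, hv, rfl⟩
    exact degree_padDegree i (degree_le_of_isMinMonGen hJ hv)
  · rintro ⟨v, hv, hvu⟩
    exact hmiss v hv hvu

theorem muI_le_of_pow_idealOfVars_le (hn : 0 < n)
    (hJ : idealOfVars (Fin n) K ^ k ≤ monomialIdeal K U) :
    muI (monomialIdeal K U) ≤ (n + k - 1).choose k := by
  rw [muI_monomialIdeal, ← ncard_setOf_degree_eq]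
  exact ncard_isMinMonGen_le ⟨0, hn⟩ hJ

theorem eq_pow_idealOfVars_of_le_muI (hn : 2 ≤ n)
    (hJ : idealOfVars (Fin n) K ^ k ≤ monomialIdeal K U)
    (hμ : (n + k - 1).choose k ≤ muI (monomialIdeal K U)) :
    monomialIdeal K U = idealOfVars (Fin n) K ^ k := by
  refine le_antisymm ?_ hJ
  rw [← monomialIdeal_setOf_isMinMonGen U, pow_idealOfVars_eq_monomialIdeal]
  refine Ideal.span_mono (Set.image_mono fun v hv => ?_)
  refine (degree_le_of_isMinMonGen hJ hv).eq_or_lt.resolve_right fun hvk => ?_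
  have := ncard_isMinMonGen_lt (i := ⟨0, by omega⟩) (j := ⟨1, by omega⟩) (by simp) hJ
    ⟨v, hv, hvk⟩
  rw [muI_monomialIdeal, ← ncard_setOf_degree_eq] at hμ
  omega

end IdealContainingPower

section InitialIdeal

variable {K : Type} [Field K] {n : ℕ} {lt : (Fin n →₀ ℕ) → (Fin n →₀ ℕ) → Prop}
  {I : Ideal (MvPolynomial (Fin n) K)} {f : MvPolynomial (Fin n) K} {u : Fin n →₀ ℕ}

theorem iniIdeal_eq_monomialIdeal :
    iniIdeal lt I = monomialIdeal K {u | ∃ f ∈ I, IsLeadMon lt f u} := by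
  unfold iniIdeal monomialIdeal
  congr 1
  ext p
  constructor
  · rintro ⟨f, hf, u, hu, rfl⟩
    exact ⟨u, ⟨f, hf, hu⟩, rfl⟩
  · rintro ⟨u, ⟨f, hf, hu⟩, rfl⟩
    exact ⟨f, hf, u, hu, rfl⟩

theorem monomial_mem_iniIdeal (hf : f ∈ I) (hu : IsLeadMon lt f u) :
    monomial u (1 : K) ∈ iniIdeal lt I :=
  Ideal.subset_span ⟨f, hf, u, hu, rfl⟩

theorem exists_isLeadMon_of_monomial_mem_iniIdeal_s16 (hlt : IsMonOrder lt)
    (h : monomial u (1 : K) ∈ iniIdeal lt I) : ∃ f ∈ I, IsLeadMon lt f u := by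
  rw [iniIdeal_eq_monomialIdeal] at h
  obtain ⟨t, ⟨f, hf, hft⟩, htu⟩ := monomial_mem_monomialIdeal.mp h
  refine ⟨monomial (u - t) 1 * f, I.mul_mem_left _ hf, ?_⟩
  simpa [tsub_add_cancel_of_le htu] using hft.monomial_mul hlt one_ne_zero (u - t)

theorem monomialIdeal_le_iniIdeal {U : Set (Fin n →₀ ℕ)} (h : monomialIdeal K U ≤ I) :
    monomialIdeal K U ≤ iniIdeal lt I :=
  Ideal.span_le.mpr fun _ ⟨t, ht, hp⟩ =>
    hp ▸ monomial_mem_iniIdeal (h (Ideal.subset_span ⟨t, ht, rfl⟩))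
      (isLeadMon_monomial one_ne_zero t)

theorem span_eq_of_forall_isLeadMon (hlt : IsMonOrder lt) {G : Set (MvPolynomial (Fin n) K)}
    (hGI : G ⊆ I)
    (hG : ∀ f ∈ I, ∀ u, IsLeadMon lt f u → ∃ g ∈ G, ∃ v ≤ u, IsLeadMon lt g v) :
    Ideal.span G = I := by
  refine le_antisymm (Ideal.span_le.mpr hGI) fun f hf => ?_
  rcases eq_or_ne f 0 with rfl | hf0
  · exact zero_mem _
  obtain ⟨u, hu⟩ := exists_isLeadMon hlt hf0
  -- cancel the leading term of `f` by a monomial multiple of some `g ∈ G`, and induct on `u`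
  induction u using hlt.wellFounded.induction generalizing f with
  | _ u ih =>
  obtain ⟨g, hg, v, hvu, hgv⟩ := hG f hf u hu
  set q := monomial (u - v) (coeff u f / coeff v g)
  have hq : IsLeadMon lt (q * g) u := by
    simpa [tsub_add_cancel_of_le hvu] using hgv.monomial_mul hlt (div_ne_zero hu.1 hgv.1) (u - v)
  have hcoeff : coeff u f = coeff u (q * g) := by
    rw [coeff_monomial_mul', if_pos tsub_le_self, tsub_tsub_cancel_of_le hvu,
      div_mul_cancel₀ _ hgv.1]
  rw [← sub_add_cancel f (q * g)]
  refine add_mem ?_ (Ideal.mul_mem_left _ _ (Ideal.subset_span hg))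
  rcases eq_or_ne (f - q * g) 0 with h0 | h0
  · rw [h0]
    exact zero_mem _
  obtain ⟨u', hu'⟩ := exists_isLeadMon hlt h0
  exact ih u' (hu.lt_of_coeff_sub_ne_zero hq hcoeff hu'.1) _
    (sub_mem hf (I.mul_mem_left _ (hGI hg))) h0 hu'

theorem muI_le_muI_iniIdeal (hlt : IsMonOrder lt) (I : Ideal (MvPolynomial (Fin n) K)) :
    muI I ≤ muI (iniIdeal lt I) := by
  set G := {v | IsMinMonGen (iniIdeal lt I) v}
  choose! g hgI hg using fun v (hv : v ∈ G) => exists_isLeadMon_of_monomial_mem_iniIdeal_s16 hlt hv.1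
  have hspan : Ideal.span (g '' G) = I := by
    refine span_eq_of_forall_isLeadMon hlt (Set.image_subset_iff.mpr hgI) fun f hf u hu => ?_
    obtain ⟨v, hvu, hv⟩ := exists_isMinMonGen_le (monomial_mem_iniIdeal hf hu)
    exact ⟨g v, Set.mem_image_of_mem g hv, v, hvu, hg v hv⟩
  calc muI I ≤ (g '' G).ncard := muI_le_ncard ((setOf_isMinMonGen_finite _).image g) hspan
    _ ≤ G.ncard := Set.ncard_image_le (setOf_isMinMonGen_finite _)
    _ = muI (iniIdeal lt I) := by
      simp only [G, iniIdeal_eq_monomialIdeal (I := I), muI_monomialIdeal]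

theorem eq_monomialIdeal_of_iniIdeal_le (hlt : IsMonOrder lt) {U : Set (Fin n →₀ ℕ)}
    (hUI : monomialIdeal K U ≤ I) (hini : iniIdeal lt I ≤ monomialIdeal K U) :
    I = monomialIdeal K U := by
  refine (span_eq_of_forall_isLeadMon hlt (G := (fun u => monomial u (1 : K)) '' U) ?_ ?_).symm
  · rintro _ ⟨t, ht, rfl⟩
    exact hUI (Ideal.subset_span ⟨t, ht, rfl⟩)
  · intro f hf u hu
    obtain ⟨t, ht, htu⟩ := monomial_mem_monomialIdeal.mp (hini (monomial_mem_iniIdeal hf hu))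
    exact ⟨_, ⟨t, ht, rfl⟩, t, htu, isLeadMon_monomial one_ne_zero t⟩

end InitialIdeal

theorem stmt16_general {K : Type} [Field K] {n : ℕ} (hn : 2 ≤ n) (k : ℕ)
    (lt : (Fin n →₀ ℕ) → (Fin n →₀ ℕ) → Prop) (hlt : IsMonOrder lt)
    (I : Ideal (MvPolynomial (Fin n) K))
    (hmk :
      (Ideal.span (Set.range (MvPolynomial.X : Fin n → MvPolynomial (Fin n) K))) ^ k ≤ I) :
    muI I ≤ muI (iniIdeal lt I) ∧
    muI (iniIdeal lt I) ≤
      muI ((Ideal.span (Set.range (MvPolynomial.X : Fin n → MvPolynomial (Fin n) K))) ^ k) ∧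
    muI ((Ideal.span (Set.range (MvPolynomial.X : Fin n → MvPolynomial (Fin n) K))) ^ k) =
      (n + k - 1).choose (n - 1) ∧
    (muI I = (n + k - 1).choose (n - 1) ↔
      I = (Ideal.span (Set.range (MvPolynomial.X : Fin n → MvPolynomial (Fin n) K))) ^ k) := by
  have hchoose : (n + k - 1).choose k = (n + k - 1).choose (n - 1) :=
    Nat.choose_symm_of_eq_add (by omega)
  have hμ : muI (idealOfVars (Fin n) K ^ k) = (n + k - 1).choose (n - 1) :=
    hchoose ▸ muI_pow_idealOfVars k
  have hini : idealOfVars (Fin n) K ^ k ≤ iniIdeal lt I := by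
    rw [pow_idealOfVars_eq_monomialIdeal] at hmk ⊢
    exact monomialIdeal_le_iniIdeal hmk
  have hle := muI_le_muI_iniIdeal hlt I
  rw [iniIdeal_eq_monomialIdeal] at hle hini ⊢
  refine ⟨hle, hμ ▸ hchoose ▸ muI_le_of_pow_idealOfVars_le (by omega) hini, hμ, fun h => ?_,
    fun h => h ▸ hμ⟩
  have hini_eq : iniIdeal lt I = idealOfVars (Fin n) K ^ k :=
    iniIdeal_eq_monomialIdeal.trans (eq_pow_idealOfVars_of_le_muI hn hini (by omega))
  rw [pow_idealOfVars_eq_monomialIdeal] at hmk hini_eq ⊢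
  exact eq_monomialIdeal_of_iniIdeal_le hlt hmk hini_eq.le

/-- Let `n ≥ 2` and let `I` be a graded ideal of `S = K[x₁,…,x_n]` containing `m^k`, where
`m = (x₁,…,x_n)`, and let `<` be any monomial order. Then
`μ(I) ≤ μ(ini_<(I)) ≤ μ(m^k) = C(n+k-1, n-1)`, and `μ(I) = C(n+k-1, n-1)` iff `I = m^k`. -/
theorem stmt16 {K : Type} [Field K] {n : ℕ} (hn : 2 ≤ n) (k : ℕ)
    (lt : (Fin n →₀ ℕ) → (Fin n →₀ ℕ) → Prop) (hlt : IsMonOrder lt)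
    (I : Ideal (MvPolynomial (Fin n) K))
    (hgraded : ∃ S : Set (MvPolynomial (Fin n) K),
      (∀ f ∈ S, ∃ d, MvPolynomial.IsHomogeneous f d) ∧ Ideal.span S = I)
    (hmk :
      (Ideal.span (Set.range (MvPolynomial.X : Fin n → MvPolynomial (Fin n) K))) ^ k ≤ I) :
    muI I ≤ muI (iniIdeal lt I) ∧
    muI (iniIdeal lt I) ≤
      muI ((Ideal.span (Set.range (MvPolynomial.X : Fin n → MvPolynomial (Fin n) K))) ^ k) ∧
    muI ((Ideal.span (Set.range (MvPolynomial.X : Fin n → MvPolynomial (Fin n) K))) ^ k) =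
      (n + k - 1).choose (n - 1) ∧
    (muI I = (n + k - 1).choose (n - 1) ↔
      I = (Ideal.span (Set.range (MvPolynomial.X : Fin n → MvPolynomial (Fin n) K))) ^ k) :=
  stmt16_general hn k lt hlt I hmk
end
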